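/- arXiv:0710.2573 — 2 statements merged into one kernel-verified Lean document; each statement's English description precedes it below -/
import Mathlib

section
/- Let Γ be a connected finite simple graph and let v_i, v_j be vertices with d(v_i, v_j) ≥ 3. Let K be a connected component of Γ \ S_i and Q a connected component of Γ \ S_j. If v_i ∈ Q and v_j ∈ K, then K ∪ Q contains every vertex of Γ. -/
/-!
Since `d(i, j) ≥ 3`, the stars `S_i` and `S_j` are disjoint. So `S_i` avoids `S_j`, and as it is
connected and contains `i ∈ Q`, the whole star `S_i` lies in the component `Q`; likewise `S_j ⊆ K`.
Then `K ∪ Q` is closed under adjacency: a neighbour of `K` lies in `K` unless it is in `S_i ⊆ Q`,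
and a neighbour of `Q` lies in `Q` unless it is in `S_j ⊆ K`. In a connected graph a nonempty set
closed under adjacency is everything.
-/

def gstar {V : Type*} (G : SimpleGraph V) (v : V) : Set V := {u | u = v ∨ G.Adj v u}

def IsCompOf {V : Type*} (G : SimpleGraph V) (s K : Set V) : Prop :=
  K.Nonempty ∧ K ⊆ s ∧ (G.induce K).Connected ∧
    ∀ K' : Set V, K ⊆ K' → K' ⊆ s → (G.induce K').Connected → K' = K

namespace IsCompOf

variable {V : Type*} {G : SimpleGraph V} {s t K Q : Set V}

lemma mem_of_adj (hK : IsCompOf G s K) {u v : V} (hu : u ∈ K) (huv : G.Adj u v) (hv : v ∈ s) :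
    v ∈ K := by
  obtain ⟨-, hKs, hKconn, hmax⟩ := hK
  have hsingle : (G.induce {v}).Preconnected := by simp
  have hconn := SimpleGraph.connected_induce_union hKconn.preconnected hsingle hu rfl huv
  rw [← hmax _ Set.subset_union_left (Set.union_subset hKs (by simpa using hv)) hconn]
  exact Or.inr rfl

lemma gstar_subset (hK : IsCompOf G s K) {u : V} (hu : u ∈ K) (hs : gstar G u ⊆ s) :
    gstar G u ⊆ K := by
  rintro v (rfl | huv)
  · exact hu
  · exact hK.mem_of_adj hu huv (hs (Or.inr huv))

lemma union_mem_of_adj (hK : IsCompOf G s K) (hQ : IsCompOf G t Q) (hsQ : sᶜ ⊆ Q)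
    (htK : tᶜ ⊆ K) {u v : V} (hu : u ∈ K ∪ Q) (huv : G.Adj u v) : v ∈ K ∪ Q := by
  by_cases hvs : v ∈ s
  · by_cases hvt : v ∈ t
    · exact hu.imp (hK.mem_of_adj · huv hvs) (hQ.mem_of_adj · huv hvt)
    · exact Or.inl (htK hvt)
  · exact Or.inr (hsQ hvs)

end IsCompOf

lemma SimpleGraph.Preconnected.mem_of_forall_adj {V : Type*} {G : SimpleGraph V}
    (hG : G.Preconnected) {S : Set V} {u : V} (hu : u ∈ S)
    (hS : ∀ ⦃a b : V⦄, a ∈ S → G.Adj a b → b ∈ S) (v : V) : v ∈ S := by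
  induction (SimpleGraph.reachable_iff_reflTransGen u v).1 (hG u v) with
  | refl => exact hu
  | tail _ hbc ih => exact hS ih hbc

lemma SimpleGraph.Connected.disjoint_gstar {V : Type*} {G : SimpleGraph V} (hG : G.Connected)
    {i j : V} (hd : 3 ≤ G.dist i j) : Disjoint (gstar G i) (gstar G j) := by
  have dist_le_one {w u : V} (hu : u ∈ gstar G w) : G.dist w u ≤ 1 := by
    rcases hu with rfl | hwu
    · simp
    · exact (SimpleGraph.dist_eq_one_iff_adj.2 hwu).le
  refine Set.disjoint_left.2 fun u hui huj => ?_
  have := hG.dist_triangle (u := i) (v := u) (w := j)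
  have := dist_le_one hui
  have := G.dist_comm ▸ dist_le_one huj
  omega

theorem stmt3_general {V : Type*} (G : SimpleGraph V) (hconn : G.Connected)
    (i j : V) (hd : 3 ≤ G.dist i j)
    (K Q : Set V)
    (hK : IsCompOf G ((gstar G i)ᶜ) K) (hQ : IsCompOf G ((gstar G j)ᶜ) Q)
    (hiQ : i ∈ Q) (hjK : j ∈ K) :
    ∀ v : V, v ∈ K ∪ Q := by
  have hdisj := hconn.disjoint_gstar hd
  have hiQ' : gstar G i ⊆ Q := hQ.gstar_subset hiQ hdisj.subset_compl_right
  have hjK' : gstar G j ⊆ K := hK.gstar_subset hjK hdisj.subset_compl_left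
  exact hconn.preconnected.mem_of_forall_adj (Or.inr hiQ)
    fun _ _ hu huv => hK.union_mem_of_adj hQ (by simpa using hiQ') (by simpa using hjK') hu huv

theorem stmt3 {V : Type*} [Fintype V] (G : SimpleGraph V) (hconn : G.Connected)
    (i j : V) (hd : 3 ≤ G.dist i j)
    (K Q : Set V)
    (hK : IsCompOf G ((gstar G i)ᶜ) K) (hQ : IsCompOf G ((gstar G j)ᶜ) Q)
    (hiQ : i ∈ Q) (hjK : j ∈ K) :
    ∀ v : V, v ∈ K ∪ Q :=
  stmt3_general G hconn i j hd K Q hK hQ hiQ hjK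
end

section
/- Let Γ be a finite simple graph and let v_i, v_j be vertices with d(v_i, v_j) ≥ 2. A set R of vertices is simultaneously a connected component of Γ \ S_i and of Γ \ S_j if and only if R is a connected component of Γ \ (L_i ∩ L_j) with v_i ∉ R and v_j ∉ R. -/
def glink {V : Type*} (G : SimpleGraph V) (v : V) : Set V := {u | G.Adj v u}

/-! A component of a vertex set `s` is the same as a nonempty connected subset of `s` closed under
taking neighbours in `s`. Since `d(vᵢ, vⱼ) ≥ 2`, we have `Sᵢ ∩ Sⱼ ⊆ Lᵢ ∩ Lⱼ`, so a neighbour of `R`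
outside `Lᵢ ∩ Lⱼ` misses `Sᵢ` or `Sⱼ` and hence lies in `R`. Conversely, `vᵢ ∉ Lᵢ ∩ Lⱼ`, so a
component of `(Lᵢ ∩ Lⱼ)ᶜ` avoiding `vᵢ` has no neighbour `vᵢ`; it therefore lies in the smaller set
`Sᵢᶜ`, where it is still a component. -/

section

open SimpleGraph

variable {V : Type*} {G : SimpleGraph V}

lemma mem_gstar_self (v : V) : v ∈ gstar G v := Or.inl rfl

lemma glink_subset_gstar (v : V) : glink G v ⊆ gstar G v := fun _ => Or.inr

lemma gstar_inter_gstar_subset_glink_inter_glink {i j : V} (hne : i ≠ j) (hnadj : ¬ G.Adj i j) :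
    gstar G i ∩ gstar G j ⊆ glink G i ∩ glink G j := by
  rintro u ⟨rfl | hiu, rfl | hju⟩
  · exact absurd rfl hne
  · exact absurd hju.symm hnadj
  · exact absurd hiu hnadj
  · exact ⟨hiu, hju⟩

lemma induce_insert_connected {R : Set V} {r w : V} (hR : (G.induce R).Connected) (hr : r ∈ R)
    (hrw : G.Adj r w) : (G.induce (insert w R)).Connected := by
  have hunion : insert w R = R ∪ {r, w} := by
    ext x
    simp only [Set.mem_insert_iff, Set.mem_union, Set.mem_singleton_iff]
    constructor
    · rintro (rfl | hx) <;> simp [*]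
    · rintro (hx | rfl | rfl) <;> simp [*]
  rw [hunion]
  exact induce_union_connected hR.preconnected (induce_pair_connected_of_adj hrw).preconnected
    ⟨r, hr, Set.mem_insert r {w}⟩

namespace IsCompOf

variable {s t R : Set V}

lemma mem_of_adj_s4 (hR : IsCompOf G s R) {r w : V} (hr : r ∈ R) (hw : w ∈ s) (hrw : G.Adj r w) :
    w ∈ R :=
  hR.2.2.2 (insert w R) (Set.subset_insert w R) (Set.insert_subset hw hR.2.1)
    (induce_insert_connected hR.2.2.1 hr hrw) ▸ Set.mem_insert w R

lemma of_adj_closed (hne : R.Nonempty) (hRs : R ⊆ s) (hconn : (G.induce R).Connected)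
    (hclosed : ∀ ⦃r w⦄, r ∈ R → w ∈ s → G.Adj r w → w ∈ R) : IsCompOf G s R := by
  refine ⟨hne, hRs, hconn, fun K hRK hKs hK => (Set.Subset.antisymm ?_ hRK)⟩
  intro x hxK
  by_contra hxR
  obtain ⟨r, hr⟩ := hne
  obtain ⟨p⟩ := hK.preconnected ⟨r, hRK hr⟩ ⟨x, hxK⟩
  obtain ⟨d, -, hd₁, hd₂⟩ := p.exists_boundary_dart {y | (y : V) ∈ R} hr hxR
  exact hd₂ (hclosed hd₁ (hKs d.snd.2) d.adj)

lemma mono (hR : IsCompOf G t R) (hRs : R ⊆ s) (hst : s ⊆ t) : IsCompOf G s R :=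
  ⟨hR.1, hRs, hR.2.2.1, fun K hRK hKs hK => hR.2.2.2 K hRK (hKs.trans hst) hK⟩

lemma subset_compl_gstar (hR : IsCompOf G s R) {v : V} (hvs : v ∈ s) (hvR : v ∉ R) :
    R ⊆ (gstar G v)ᶜ := by
  rintro r hr (rfl | hvr)
  · exact hvR hr
  · exact hvR (hR.mem_of_adj_s4 hr hvs hvr.symm)

end IsCompOf

end

theorem stmt4_general {V : Type*} (G : SimpleGraph V) (i j : V)
    (hne : i ≠ j) (hnadj : ¬ G.Adj i j) (R : Set V) :
    (IsCompOf G ((gstar G i)ᶜ) R ∧ IsCompOf G ((gstar G j)ᶜ) R) ↔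
      (IsCompOf G ((glink G i ∩ glink G j)ᶜ) R ∧ i ∉ R ∧ j ∉ R) := by
  have hstar_i : (gstar G i)ᶜ ⊆ (glink G i ∩ glink G j)ᶜ :=
    Set.compl_subset_compl.2 (Set.inter_subset_left.trans (glink_subset_gstar i))
  have hstar_j : (gstar G j)ᶜ ⊆ (glink G i ∩ glink G j)ᶜ :=
    Set.compl_subset_compl.2 (Set.inter_subset_right.trans (glink_subset_gstar j))
  constructor
  · rintro ⟨hi, hj⟩
    refine ⟨IsCompOf.of_adj_closed hi.1 (hi.2.1.trans hstar_i) hi.2.2.1 ?_,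
      fun h => hi.2.1 h (mem_gstar_self i), fun h => hj.2.1 h (mem_gstar_self j)⟩
    intro r w hr hw hrw
    by_contra hwR
    refine hw (gstar_inter_gstar_subset_glink_inter_glink hne hnadj ⟨?_, ?_⟩)
    · by_contra hwi
      exact hwR (hi.mem_of_adj_s4 hr hwi hrw)
    · by_contra hwj
      exact hwR (hj.mem_of_adj_s4 hr hwj hrw)
  · rintro ⟨hR, hiR, hjR⟩
    have hi : i ∈ (glink G i ∩ glink G j)ᶜ := fun h => G.irrefl h.1
    have hj : j ∈ (glink G i ∩ glink G j)ᶜ := fun h => G.irrefl h.2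
    exact ⟨hR.mono (hR.subset_compl_gstar hi hiR) hstar_i,
      hR.mono (hR.subset_compl_gstar hj hjR) hstar_j⟩

theorem stmt4 {V : Type*} [Fintype V] (G : SimpleGraph V) (i j : V)
    (hne : i ≠ j) (hnadj : ¬ G.Adj i j) (R : Set V) :
    (IsCompOf G ((gstar G i)ᶜ) R ∧ IsCompOf G ((gstar G j)ᶜ) R) ↔
      (IsCompOf G ((glink G i ∩ glink G j)ᶜ) R ∧ i ∉ R ∧ j ∉ R) :=
  stmt4_general G i j hne hnadj R
end
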